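/- Let 0 < b ≤ a with ab = 1 and let Λ > a + b. For x ∈ [b/2, a/2) set y(x) := x b/(a − 2x) and, for τ > 0, E_τ(x) := 2(a − 2x + b + 2y(x)) + (1/τ)[ y(x)² (a − 2x) − b³/12 + x b²/2 ]. Then there exists τ₁ = τ₁(Λ) > 0 such that for all 0 < τ < τ₁ the function x ↦ E_τ(x) is strictly increasing on [b/2, a/2), and E_τ(x) → +∞ as x → (a/2)⁻. -/
import Mathlib

open Set Filter

/-- The one-variable reduction of the incremental energy in the regime
`x ∈ [b/2, a/2)`: with `y(x) = x b / (a - 2x)`,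
`E_τ(x) = 2(a - 2x + b + 2 y(x)) + (1/τ)[y(x)² (a - 2x) - b³/12 + x b²/2]`. -/
noncomputable def Ered (a b τ x : ℝ) : ℝ :=
  2 * (a - 2 * x + b + 2 * (x * b / (a - 2 * x))) +
    (1 / τ) * ((x * b / (a - 2 * x)) ^ 2 * (a - 2 * x) - b ^ 3 / 12 + x * b ^ 2 / 2)

set_option maxHeartbeats 1000000 in
theorem statement7 (Λ : ℝ) :
    ∃ τ₁ > (0 : ℝ),
      ∀ a b : ℝ, 0 < b → b ≤ a → a * b = 1 → a + b < Λ →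
      ∀ τ : ℝ, 0 < τ → τ < τ₁ →
        StrictMonoOn (Ered a b τ) (Set.Ico (b / 2) (a / 2)) ∧
        Tendsto (Ered a b τ) (nhdsWithin (a / 2) (Set.Iio (a / 2))) atTop := by
  refine ⟨1 / (8 * (Λ ^ 2 + 1)), by positivity, ?_⟩
  intro a b hb hba hab hΛ τ hτ hτ1
  have ha : 0 < a := lt_of_lt_of_le hb hba
  have haΛ : a < Λ := by linarith
  have hΛ0 : 0 < Λ := by linarith
  -- key bound : 8 τ < b^2
  have hb2 : 8 * τ < b ^ 2 := by
    have h1 : a ^ 2 < Λ ^ 2 + 1 := by nlinarith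
    have h2 : a ^ 2 * b ^ 2 = 1 := by nlinarith
    have h3 : 8 * τ * (Λ ^ 2 + 1) < 1 := by
      rw [lt_div_iff₀ (by positivity)] at hτ1
      nlinarith
    nlinarith [sq_nonneg b, mul_pos hτ (pow_pos hb 2)]
  constructor
  · -- strict monotonicity
    intro x hx x' hx' hlt
    obtain ⟨hx1, hx2⟩ := hx
    obtain ⟨hx1', hx2'⟩ := hx'
    have hu : 0 < a - 2 * x := by linarith
    have hu' : 0 < a - 2 * x' := by linarith
    have hx0 : 0 < x := by linarith
    have hx0' : 0 < x' := by linarith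
    have hc : 0 < τ * (a - 2 * x) * (a - 2 * x') := by positivity
    have key : τ * (a - 2 * x) * (a - 2 * x') * (Ered a b τ x' - Ered a b τ x)
        = (x' - x) * (-(4 * τ) * ((a - 2 * x) * (a - 2 * x')) + 4 * τ * (a * b)
            + b ^ 2 * (x * (a - 2 * x') + a * x')
            + (a - 2 * x) * (a - 2 * x') * b ^ 2 / 2) := by
      have hu0 : a - 2 * x ≠ 0 := ne_of_gt hu
      have hu0' : a - 2 * x' ≠ 0 := ne_of_gt hu'
      have hτ0 : τ ≠ 0 := ne_of_gt hτ
      unfold Ered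
      field_simp
      ring
    have hbr : 0 < -(4 * τ) * ((a - 2 * x) * (a - 2 * x')) + 4 * τ * (a * b)
        + b ^ 2 * (x * (a - 2 * x') + a * x')
        + (a - 2 * x) * (a - 2 * x') * b ^ 2 / 2 := by
      have h4 : 0 < (a - 2 * x) * (a - 2 * x') := mul_pos hu hu'
      have h5 : 0 ≤ b ^ 2 * (x * (a - 2 * x') + a * x') := by positivity
      rw [hab]
      nlinarith [mul_pos hτ h4, mul_lt_mul_of_pos_right hb2 h4]
    have hD : 0 < τ * (a - 2 * x) * (a - 2 * x') * (Ered a b τ x' - Ered a b τ x) := by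
      rw [key]; exact mul_pos (by linarith) hbr
    nlinarith [hD, hc]
  · -- divergence
    have heq : ∀ x ∈ Set.Iio (a / 2),
        Ered a b τ x = (2 * (a - 2 * x) + 2 * b + (1 / τ) * (-(b ^ 3) / 12 + x * b ^ 2 / 2))
          + (4 * x * b + (1 / τ) * x ^ 2 * b ^ 2) * (a - 2 * x)⁻¹ := by
      intro x hx
      have hu : 0 < a - 2 * x := by simp only [Set.mem_Iio] at hx; linarith
      have hu0 : a - 2 * x ≠ 0 := ne_of_gt hu
      have hτ0 : τ ≠ 0 := ne_of_gt hτ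
      unfold Ered
      field_simp
      ring
    have h1 : Tendsto (fun x : ℝ => a - 2 * x) (nhdsWithin (a / 2) (Set.Iio (a / 2)))
        (nhdsWithin 0 (Set.Ioi 0)) := by
      apply tendsto_nhdsWithin_of_tendsto_nhds_of_eventually_within
      · have : Tendsto (fun x : ℝ => a - 2 * x) (nhds (a / 2)) (nhds (a - 2 * (a / 2))) := by
          exact (continuous_const.sub (continuous_const.mul continuous_id)).tendsto _
        rw [show a - 2 * (a / 2) = (0:ℝ) by ring] at this
        exact this.mono_left nhdsWithin_le_nhds
      · filter_upwards [self_mem_nhdsWithin] with x hx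
        simp only [Set.mem_Iio] at hx
        simp only [Set.mem_Ioi]
        linarith
    have hinv : Tendsto (fun x : ℝ => (a - 2 * x)⁻¹) (nhdsWithin (a / 2) (Set.Iio (a / 2)))
        atTop := tendsto_inv_nhdsGT_zero.comp h1
    have hC : 0 < 4 * (a / 2) * b + (1 / τ) * (a / 2) ^ 2 * b ^ 2 := by positivity
    have hnum : Tendsto (fun x : ℝ => 4 * x * b + (1 / τ) * x ^ 2 * b ^ 2)
        (nhdsWithin (a / 2) (Set.Iio (a / 2)))
        (nhds (4 * (a / 2) * b + (1 / τ) * (a / 2) ^ 2 * b ^ 2)) := by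
      apply Tendsto.mono_left _ nhdsWithin_le_nhds
      exact (Continuous.tendsto (by continuity) _)
    have hg : Tendsto (fun x : ℝ => (4 * x * b + (1 / τ) * x ^ 2 * b ^ 2) * (a - 2 * x)⁻¹)
        (nhdsWithin (a / 2) (Set.Iio (a / 2))) atTop := hnum.pos_mul_atTop hC hinv
    have hf : Tendsto (fun x : ℝ => 2 * (a - 2 * x) + 2 * b + (1 / τ) * (-(b ^ 3) / 12 + x * b ^ 2 / 2))
        (nhdsWithin (a / 2) (Set.Iio (a / 2)))
        (nhds (2 * (a - 2 * (a / 2)) + 2 * b + (1 / τ) * (-(b ^ 3) / 12 + (a / 2) * b ^ 2 / 2))) := by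
      apply Tendsto.mono_left _ nhdsWithin_le_nhds
      exact (Continuous.tendsto (by continuity) _)
    have := hf.add_atTop hg
    refine this.congr' ?_
    filter_upwards [self_mem_nhdsWithin] with x hx
    exact (heq x hx).symm
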